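/- arXiv:1605.02317 — 3 statements merged into one kernel-verified Lean document; each statement's English description precedes it below -/
import Mathlib

section
/- Let 1 ≤ K ≤ D be integers, let W_1,…,W_D and V be finitely-valued random variables on a common probability space, and let Q be the set of all injective tuples d = (d_1,…,d_K) ∈ {1,…,D}^K. Then Σ_{d∈Q} H(W_{d_1},…,W_{d_K} | V) ≥ (K/D) · K! · C(D,K) · H(W_1,…,W_D | V). -/
/-!
Every variable in sight is a function of `J = ((W_d)_d, V)`, so all entropies are entropies of
maps `f` out of the finite space of values of `J`, weighted by its law `p`. There
`H(f) = -∑ₓ p x log p(f⁻¹(f x))` depends only on the fibres of `f`, and Gibbs' inequality makes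
`F A = H((W_d)_{d ∈ A}, V)` submodular. Ordering the coordinates, submodularity bounds each
`H(W_{d₁},…,W_{d_K} | V) = F {d₁,…,d_K} - F ∅` below by the sum of the increments
`F {b ≤ dₖ} - F {b < dₖ}`, and the increments of all coordinates telescope to
`F univ - F ∅ = H(W | V)`. Averaging over the injective tuples, every coordinate occurs equally
often in every position.
-/

open MeasureTheory ProbabilityTheory

/-- Shannon entropy (natural-log base) of a finitely-valued random variable. -/
noncomputable def Hent {Ω S : Type*} [MeasurableSpace Ω] [Fintype S]
    (μ : Measure Ω) (X : Ω → S) : ℝ :=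
  ∑ s : S, Real.negMulLog (μ (X ⁻¹' {s})).toReal

/-- Conditional entropy `H(X|Y) = H(X,Y) − H(Y)`. -/
noncomputable def condHent {Ω S T : Type*} [MeasurableSpace Ω] [Fintype S] [Fintype T]
    (μ : Measure Ω) (X : Ω → S) (Y : Ω → T) : ℝ :=
  Hent μ (fun ω => (X ω, Y ω)) - Hent μ Y

open Finset Real

theorem Real.mul_log_sub_log_le_of_le {p x y z : ℝ} (hp : 0 ≤ p) (hx : p ≤ x) (hy : p ≤ y)
    (hxz : x ≤ z) : p * (log x + log y - log z - log p) ≤ x * y / z - p := by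
  rcases hp.eq_or_lt with rfl | hp
  · simpa using div_nonneg (mul_nonneg hx hy) (hx.trans hxz)
  have hx' := hp.trans_le hx
  have hy' := hp.trans_le hy
  have hz' := hx'.trans_le hxz
  have h := log_le_sub_one_of_pos (div_pos (div_pos (mul_pos hx' hy') hz') hp)
  rw [log_div (by positivity) hp.ne', log_div (by positivity) hz'.ne',
    log_mul hx'.ne' hy'.ne'] at h
  calc p * (log x + log y - log z - log p) ≤ p * (x * y / z / p - 1) := by gcongr
    _ = x * y / z - p := by field_simp

theorem Real.negMulLog_sum {ι : Type*} (s : Finset ι) (f : ι → ℝ) :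
    negMulLog (∑ i ∈ s, f i) = ∑ i ∈ s, -f i * log (∑ j ∈ s, f j) := by
  simp only [negMulLog, neg_mul, sum_mul, sum_neg_distrib]

theorem Real.negMulLog_submodular {A B C : Type*} [Fintype A] [Fintype B] [Fintype C]
    (p : A → B → C → ℝ) (hp : ∀ a b c, 0 ≤ p a b c) :
    ∑ a, ∑ b, ∑ c, negMulLog (p a b c) + ∑ b, negMulLog (∑ a, ∑ c, p a b c) ≤
      ∑ a, ∑ b, negMulLog (∑ c, p a b c) + ∑ b, ∑ c, negMulLog (∑ a, p a b c) := by
  set pXY : A → B → ℝ := fun a b => ∑ c, p a b c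
  set pYZ : B → C → ℝ := fun b c => ∑ a, p a b c
  set pY : B → ℝ := fun b => ∑ a, ∑ c, p a b c
  have eXY : ∑ a, ∑ b, negMulLog (pXY a b) = ∑ a, ∑ b, ∑ c, -p a b c * log (pXY a b) := by
    simp only [pXY, negMulLog_sum]
  have eYZ : ∑ b, ∑ c, negMulLog (pYZ b c) = ∑ a, ∑ b, ∑ c, -p a b c * log (pYZ b c) := by
    conv_rhs => rw [sum_comm]
    refine sum_congr rfl fun b _ => ?_
    conv_rhs => rw [sum_comm]
    simp only [pYZ, negMulLog_sum]
  have eY : ∑ b, negMulLog (pY b) = ∑ a, ∑ b, ∑ c, -p a b c * log (pY b) := by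
    conv_rhs => rw [sum_comm]
    refine sum_congr rfl fun b _ => ?_
    simp only [pY, negMulLog, neg_mul, sum_mul, sum_neg_distrib]
  -- Gibbs' inequality against `q = pXY * pYZ / pY`, which has the same total mass as `p`
  have hq : ∑ a, ∑ b, ∑ c, pXY a b * pYZ b c / pY b = ∑ a, ∑ b, ∑ c, p a b c := by
    rw [sum_comm, sum_comm (γ := A)]
    refine sum_congr rfl fun b _ => ?_
    have hYZ : ∑ c, pYZ b c = pY b := sum_comm
    simp only [← mul_sum, ← sum_div, ← sum_mul, hYZ]
    exact mul_self_div_self _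
  have key : ∀ a b c, p a b c * (log (pXY a b) + log (pYZ b c) - log (pY b) - log (p a b c)) ≤
      pXY a b * pYZ b c / pY b - p a b c := fun a b c =>
    mul_log_sub_log_le_of_le (hp a b c) (single_le_sum (fun c _ => hp a b c) (mem_univ c))
      (single_le_sum (fun a _ => hp a b c) (mem_univ a))
      (single_le_sum (f := (pXY · b)) (fun a _ => sum_nonneg fun c _ => hp a b c) (mem_univ a))
  have hsum := sum_le_sum fun a (_ : a ∈ univ) => sum_le_sum fun b (_ : b ∈ univ) =>
    sum_le_sum fun c (_ : c ∈ univ) => key a b c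
  simp only [mul_add, mul_sub, sum_add_distrib, sum_sub_distrib, hq, sub_self] at hsum
  rw [eXY, eYZ, eY]
  simp only [negMulLog, neg_mul, sum_neg_distrib]
  linarith

section WeightedEntropy

variable {M A B C : Type*} [Fintype M] [Fintype A] [DecidableEq A] [Fintype B] [DecidableEq B]
  [Fintype C] [DecidableEq C]

noncomputable def entropyOf (p : M → ℝ) (f : M → B) : ℝ :=
  ∑ b, negMulLog (∑ x with f x = b, p x)

theorem entropyOf_eq_neg_sum (p : M → ℝ) (f : M → B) :
    entropyOf p f = -∑ x, p x * log (∑ y with f y = f x, p y) := by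
  rw [entropyOf, ← sum_fiberwise univ f, ← sum_neg_distrib]
  refine sum_congr rfl fun b _ => ?_
  rw [negMulLog, neg_mul, sum_mul]
  congr 1
  exact sum_congr rfl fun x hx => by rw [(mem_filter.1 hx).2]

theorem entropyOf_congr (p : M → ℝ) {f : M → B} {g : M → C}
    (h : ∀ x y, f y = f x ↔ g y = g x) : entropyOf p f = entropyOf p g := by
  simp only [entropyOf_eq_neg_sum, h]

theorem sum_filter_eq_sum_sum_filter_and (p : M → ℝ) (P : M → Prop) [DecidablePred P]
    (g : M → A) : ∑ x with P x, p x = ∑ a, ∑ x with P x ∧ g x = a, p x := by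
  simp_rw [← filter_filter, sum_fiberwise]

theorem entropyOf_submodular {p : M → ℝ} (hp : ∀ x, 0 ≤ p x) (X : M → A) (Y : M → B)
    (Z : M → C) :
    entropyOf p (fun x => (X x, Y x, Z x)) + entropyOf p Y ≤
      entropyOf p (fun x => (X x, Y x)) + entropyOf p (fun x => (Y x, Z x)) := by
  set q : A → B → C → ℝ := fun a b c => ∑ x with X x = a ∧ Y x = b ∧ Z x = c, p x
  have eXYZ : entropyOf p (fun x => (X x, Y x, Z x)) = ∑ a, ∑ b, ∑ c, negMulLog (q a b c) := by
    simp only [entropyOf, Fintype.sum_prod_type, Prod.mk.injEq, q]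
  have eXY : entropyOf p (fun x => (X x, Y x)) = ∑ a, ∑ b, negMulLog (∑ c, q a b c) := by
    simp only [entropyOf, Fintype.sum_prod_type, Prod.mk.injEq]
    refine sum_congr rfl fun a _ => sum_congr rfl fun b _ => ?_
    rw [sum_filter_eq_sum_sum_filter_and p _ Z]
    simp only [q, and_assoc]
  have eYZ : entropyOf p (fun x => (Y x, Z x)) = ∑ b, ∑ c, negMulLog (∑ a, q a b c) := by
    simp only [entropyOf, Fintype.sum_prod_type, Prod.mk.injEq]
    refine sum_congr rfl fun b _ => sum_congr rfl fun c _ => ?_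
    rw [sum_filter_eq_sum_sum_filter_and p _ X]
    simp only [q, and_comm]
  have eY : entropyOf p Y = ∑ b, negMulLog (∑ a, ∑ c, q a b c) := by
    refine sum_congr rfl fun b _ => ?_
    rw [sum_filter_eq_sum_sum_filter_and p _ X]
    refine congrArg _ (sum_congr rfl fun a _ => ?_)
    rw [sum_filter_eq_sum_sum_filter_and p _ Z]
    exact sum_congr rfl fun c _ => sum_congr (filter_congr fun x _ => by tauto) fun _ _ => rfl
  rw [eXYZ, eXY, eYZ, eY]
  exact negMulLog_submodular q fun a b c => sum_nonneg fun x _ => hp x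

section Law

variable {Ω : Type*} [MeasurableSpace Ω] (μ : Measure Ω) [IsFiniteMeasure μ] {J : Ω → M}

noncomputable def lawWeights (μ : Measure Ω) (J : Ω → M) (x : M) : ℝ :=
  (μ (J ⁻¹' {x})).toReal

variable [MeasurableSpace M] [MeasurableSingletonClass M]

theorem Hent_comp_eq_entropyOf (hJ : Measurable J) (f : M → B) :
    Hent μ (fun ω => f (J ω)) = entropyOf (lawWeights μ J) f := by
  refine sum_congr rfl fun b _ => ?_
  simp only [lawWeights]
  rw [← ENNReal.toReal_sum fun x _ => measure_ne_top μ _,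
    sum_measure_preimage_singleton _ fun x _ => hJ (measurableSet_singleton x)]
  congr 3
  ext ω; simp

theorem condHent_comp_eq_entropyOf_sub (hJ : Measurable J) (f : M → B) (g : M → C) :
    condHent μ (fun ω => f (J ω)) (fun ω => g (J ω)) =
      entropyOf (lawWeights μ J) (fun x => (f x, g x)) - entropyOf (lawWeights μ J) g := by
  rw [condHent, ← Hent_comp_eq_entropyOf μ hJ, ← Hent_comp_eq_entropyOf μ hJ]

end Law

end WeightedEntropy

def IsSubmodular {α : Type*} [DecidableEq α] (F : Finset α → ℝ) : Prop :=
  ∀ A B, F (A ∪ B) + F (A ∩ B) ≤ F A + F B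

section Chain

variable {α : Type*} [LinearOrder α]

theorem Finset.sum_filter_le_sub_filter_lt (G : Finset α → ℝ) (s : Finset α) :
    ∑ a ∈ s, (G {b ∈ s | b ≤ a} - G {b ∈ s | b < a}) = G s - G ∅ := by
  induction s using Finset.induction_on_max with
  | empty => simp
  | insert a s hlt ih =>
    have ha : a ∉ s := fun h => lt_irrefl a (hlt a h)
    rw [sum_insert ha, filter_insert, filter_insert, if_pos le_rfl, if_neg (lt_irrefl a),
      filter_true_of_mem fun b hb => (hlt b hb).le, filter_true_of_mem hlt]
    have hs : ∀ b ∈ s, {c ∈ insert a s | c ≤ b} = {c ∈ s | c ≤ b} ∧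
        {c ∈ insert a s | c < b} = {c ∈ s | c < b} := fun b hb => by
      rw [filter_insert, filter_insert, if_neg (not_le.2 (hlt b hb)),
        if_neg (not_lt.2 (hlt b hb).le)]
      exact ⟨rfl, rfl⟩
    rw [sum_congr rfl fun b hb => by rw [(hs b hb).1, (hs b hb).2], ih]
    ring

variable [Fintype α]

theorem IsSubmodular.sum_filter_le_sub_filter_lt_le {F : Finset α → ℝ} (hF : IsSubmodular F)
    (A : Finset α) :
    ∑ a ∈ A, (F ({b | b ≤ a} : Finset α) - F ({b | b < a} : Finset α)) ≤ F A - F ∅ := by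
  rw [← A.sum_filter_le_sub_filter_lt F]
  refine sum_le_sum fun a ha => ?_
  -- diminishing returns: adding `a` to `{b ∈ A | b < a}` gains at least as much as adding it
  -- to the larger set `{b | b < a}`
  have hunion : {b ∈ A | b ≤ a} ∪ ({b | b < a} : Finset α) = ({b | b ≤ a} : Finset α) := by
    ext b; simp only [mem_union, mem_filter, mem_univ, true_and]
    exact ⟨fun h => h.elim (·.2) le_of_lt,
      fun h => h.lt_or_eq.elim Or.inr fun hb => Or.inl ⟨hb ▸ ha, h⟩⟩
  have hinter : {b ∈ A | b ≤ a} ∩ ({b | b < a} : Finset α) = {b ∈ A | b < a} := by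
    ext b; simp only [mem_inter, mem_filter, mem_univ, true_and]
    exact ⟨fun h => ⟨h.1.1, h.2⟩, fun h => ⟨⟨h.1, h.2.le⟩, h.2⟩⟩
  have := hF {b ∈ A | b ≤ a} {b | b < a}
  rw [hunion, hinter] at this
  linarith

end Chain

theorem Finset.card_filter_apply_eq_of_perm_invariant {ι α : Type*} [DecidableEq α]
    {Q : Finset (ι → α)} (hQ : ∀ σ : Equiv.Perm α, ∀ d ∈ Q, σ ∘ d ∈ Q) (k : ι) (i j : α) :
    #{d ∈ Q | d k = i} = #{d ∈ Q | d k = j} := by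
  refine card_nbij' (Equiv.swap i j ∘ ·) (Equiv.swap i j ∘ ·) ?_ ?_ ?_ ?_ <;>
    intro d hd <;> simp only [coe_filter, Set.mem_ofPred_eq] at hd ⊢
  · exact ⟨hQ _ d hd.1, by simp [hd.2]⟩
  · exact ⟨hQ _ d hd.1, by simp [hd.2]⟩
  · ext; simp
  · ext; simp

theorem Finset.sum_apply_eq_of_perm_invariant {ι α : Type*} [Fintype α] [DecidableEq α]
    {Q : Finset (ι → α)} (hQ : ∀ σ : Equiv.Perm α, ∀ d ∈ Q, σ ∘ d ∈ Q) (k : ι) (c : α → ℝ) :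
    ∑ d ∈ Q, c (d k) = #Q / Fintype.card α * ∑ a, c a := by
  cases isEmpty_or_nonempty α
  · simpa using sum_eq_zero fun (d : ι → α) _ => isEmptyElim (d k)
  obtain ⟨i₀⟩ : Nonempty α := inferInstance
  set N := #{d ∈ Q | d k = i₀}
  have hfiber : ∀ i, #{d ∈ Q | d k = i} = N :=
    fun i => card_filter_apply_eq_of_perm_invariant hQ k i i₀
  have hQcard : #Q = Fintype.card α * N := by
    rw [card_eq_sum_card_fiberwise (f := (· k)) (t := univ) fun _ _ => mem_univ _]
    simp [hfiber]
  calc ∑ d ∈ Q, c (d k) = ∑ i, N * c i := by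
        rw [← sum_fiberwise' Q (· k) c]
        simp [hfiber]
    _ = _ := by
        rw [hQcard, ← mul_sum]; push_cast
        rw [mul_div_cancel_left₀ _ (by positivity)]

theorem IsSubmodular.han_inequality {ι α : Type*} [Fintype ι] [DecidableEq ι] [Fintype α]
    [LinearOrder α] {F : Finset α → ℝ} (hF : IsSubmodular F) {Q : Finset (ι → α)}
    (hQperm : ∀ σ : Equiv.Perm α, ∀ d ∈ Q, σ ∘ d ∈ Q) (hQinj : ∀ d ∈ Q, Function.Injective d) :
    Fintype.card ι * (#Q / Fintype.card α) * (F univ - F ∅) ≤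
      ∑ d ∈ Q, (F (univ.image d) - F ∅) := by
  set c : α → ℝ := fun a => F ({b | b ≤ a} : Finset α) - F ({b | b < a} : Finset α)
  have htelescope : ∑ a, c a = F univ - F ∅ := univ.sum_filter_le_sub_filter_lt F
  calc Fintype.card ι * (#Q / Fintype.card α) * (F univ - F ∅)
      = ∑ k : ι, ∑ d ∈ Q, c (d k) := by
        simp [sum_apply_eq_of_perm_invariant hQperm, htelescope, mul_assoc]
    _ = ∑ d ∈ Q, ∑ a ∈ univ.image d, c a := by
        rw [sum_comm]
        exact sum_congr rfl fun d hd => (sum_image fun x _ y _ h => hQinj d hd h).symm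
    _ ≤ _ := sum_le_sum fun d _ => hF.sum_filter_le_sub_filter_lt_le _

theorem Finset.card_filter_injective (α β : Type*) [Fintype α] [Fintype β] [DecidableEq α]
    [DecidableEq β] :
    #{d : α → β | Function.Injective d} =
      (Fintype.card α).factorial * (Fintype.card β).choose (Fintype.card α) := by
  rw [← Nat.descFactorial_eq_factorial_mul_choose, ← Fintype.card_subtype,
    Fintype.card_congr (Equiv.subtypeInjectiveEquivEmbedding _ _), Fintype.card_embedding_eq]

section Restrict

variable {ι T : Type*} [Fintype ι] [DecidableEq ι] {S : ι → Type*} [∀ i, Fintype (S i)]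
  [∀ i, DecidableEq (S i)] [Fintype T] [DecidableEq T]

noncomputable def restrictEntropy (p : (∀ i, S i) × T → ℝ) (A : Finset ι) : ℝ :=
  entropyOf p fun x => (A.restrict x.1, x.2)

theorem entropyOf_eq_restrictEntropy (p : (∀ i, S i) × T → ℝ) (A : Finset ι) {B : Type*}
    [Fintype B] [DecidableEq B] {f : (∀ i, S i) × T → B}
    (hf : ∀ x y, f y = f x ↔ (∀ i ∈ A, y.1 i = x.1 i) ∧ y.2 = x.2) :
    entropyOf p f = restrictEntropy p A :=
  entropyOf_congr p fun x y => by
    simp only [hf, Prod.mk.injEq, funext_iff, Finset.restrict, Subtype.forall]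

theorem isSubmodular_restrictEntropy {p : (∀ i, S i) × T → ℝ} (hp : ∀ x, 0 ≤ p x) :
    IsSubmodular (restrictEntropy p) := by
  intro A B
  set X := fun x : (∀ i, S i) × T => (A \ B).restrict x.1
  set Y := fun x : (∀ i, S i) × T => ((A ∩ B).restrict x.1, x.2)
  set Z := fun x : (∀ i, S i) × T => (B \ A).restrict x.1
  have h := entropyOf_submodular hp X Y Z
  rwa [entropyOf_eq_restrictEntropy p (A ∪ B) (f := fun x => (X x, Y x, Z x)) ?union,
    entropyOf_eq_restrictEntropy p A (f := fun x => (X x, Y x)) ?left,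
    entropyOf_eq_restrictEntropy p B (f := fun x => (Y x, Z x)) ?right] at h
  all_goals
    intro x y
    simp only [X, Y, Z, Prod.mk.injEq, funext_iff, Finset.restrict, Subtype.forall, mem_sdiff,
      mem_inter, mem_union]
    grind

theorem condHent_eq_restrictEntropy_sub {Ω : Type*} [MeasurableSpace Ω] (μ : Measure Ω)
    [IsFiniteMeasure μ] [∀ i, MeasurableSpace (S i)] [∀ i, MeasurableSingletonClass (S i)]
    [MeasurableSpace T] [MeasurableSingletonClass T] {W : ∀ i, Ω → S i}
    (hW : ∀ i, Measurable (W i)) {V : Ω → T} (hV : Measurable V) {κ : Type*} [Fintype κ]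
    [DecidableEq κ] (d : κ → ι) :
    condHent μ (fun ω k => W (d k) ω) V =
      restrictEntropy (lawWeights μ fun ω => (fun i => W i ω, V ω)) (univ.image d) -
        restrictEntropy (lawWeights μ fun ω => (fun i => W i ω, V ω)) ∅ := by
  refine (condHent_comp_eq_entropyOf_sub μ ((measurable_pi_lambda _ hW).prodMk hV)
    (fun x : (∀ i, S i) × T => fun k => x.1 (d k)) Prod.snd).trans ?_
  rw [entropyOf_eq_restrictEntropy _ (univ.image d), entropyOf_eq_restrictEntropy _ ∅] <;>
  simp [funext_iff]

end Restrict

theorem han_type_inequality_general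
    {Ω : Type*} [MeasurableSpace Ω] (μ : Measure Ω) [IsProbabilityMeasure μ]
    (K D : ℕ)
    {S : Fin D → Type*} [∀ d, Fintype (S d)]
    [∀ d, MeasurableSpace (S d)] [∀ d, MeasurableSingletonClass (S d)]
    (W : ∀ d : Fin D, Ω → S d) (hWmeas : ∀ d, Measurable (W d))
    {T : Type*} [Fintype T] [MeasurableSpace T] [MeasurableSingletonClass T]
    (V : Ω → T) (hV : Measurable V)
    (Q : Finset (Fin K → Fin D)) (hQ : ∀ d, d ∈ Q ↔ Function.Injective d) :
    (∑ d ∈ Q, condHent μ (fun ω => fun k : Fin K => W (d k) ω) V) ≥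
      ((K : ℝ) / (D : ℝ)) * (Nat.factorial K : ℝ) * (Nat.choose D K : ℝ) *
        condHent μ (fun ω => fun d : Fin D => W d ω) V := by
  classical
  set F := restrictEntropy (lawWeights μ fun ω => (fun d => W d ω, V ω))
  have htuple := condHent_eq_restrictEntropy_sub μ hWmeas hV (κ := Fin K)
  have hfull : condHent μ (fun ω d => W d ω) V = F univ - F ∅ := by
    simpa using condHent_eq_restrictEntropy_sub μ hWmeas hV (id : Fin D → Fin D)
  have hQperm : ∀ σ : Equiv.Perm (Fin D), ∀ d ∈ Q, σ ∘ d ∈ Q :=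
    fun σ d hd => (hQ _).2 (σ.injective.comp ((hQ d).1 hd))
  have hQcard : #Q = K.factorial * D.choose K := by
    rw [show Q = ({d | Function.Injective d} : Finset _) by ext; simp [hQ],
      card_filter_injective]
    simp
  have hF : IsSubmodular F := isSubmodular_restrictEntropy fun _ => ENNReal.toReal_nonneg
  have han := hF.han_inequality hQperm fun d hd => (hQ d).1 hd
  rw [sum_congr rfl fun d _ => htuple d, hfull, ge_iff_le]
  convert han using 2
  simp only [Fintype.card_fin, hQcard]
  push_cast
  ring

/-- Let `1 ≤ K ≤ D`, let `W_1,…,W_D` and `V` be finitely-valued random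
variables, and let `Q` be the set of all injective tuples `d ∈ {1,…,D}^K`. Then
`Σ_{d∈Q} H(W_{d_1},…,W_{d_K} | V) ≥ (K/D)·K!·C(D,K)·H(W_1,…,W_D | V)`. -/
theorem han_type_inequality
    {Ω : Type*} [MeasurableSpace Ω] (μ : Measure Ω) [IsProbabilityMeasure μ]
    (K D : ℕ) (hK : 1 ≤ K) (hKD : K ≤ D)
    {S : Fin D → Type*} [∀ d, Fintype (S d)]
    [∀ d, MeasurableSpace (S d)] [∀ d, MeasurableSingletonClass (S d)]
    (W : ∀ d : Fin D, Ω → S d) (hWmeas : ∀ d, Measurable (W d))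
    {T : Type*} [Fintype T] [MeasurableSpace T] [MeasurableSingletonClass T]
    (V : Ω → T) (hV : Measurable V)
    (Q : Finset (Fin K → Fin D)) (hQ : ∀ d, d ∈ Q ↔ Function.Injective d) :
    (∑ d ∈ Q, condHent μ (fun ω => fun k : Fin K => W (d k) ω) V) ≥
      ((K : ℝ) / (D : ℝ)) * (Nat.factorial K : ℝ) * (Nat.choose D K : ℝ) *
        condHent μ (fun ω => fun d : Fin D => W d ω) V :=
  han_type_inequality_general μ K D W hWmeas V hV Q hQ
end

section
/- Let A, B, Y be finitely-valued random variables on a common probability space, let β ∈ [0,1], and let E be a {0,1}-valued random variable with P(E = 0) = β that is independent of the triple (A, B, Y). Define the random variable Ū by Ū := (B, 0) on the event {E = 0} and Ū := (A, 1) on the event {E = 1}. Then I(Ū ; Y | A) = β · I(B ; Y | A). -/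
open MeasureTheory ProbabilityTheory

/-- Conditional mutual information `I(X;Y|Z) = H(X|Z) + H(Y|Z) − H(X,Y|Z)`. -/
noncomputable def condMutInfo {Ω S T U : Type*} [MeasurableSpace Ω]
    [Fintype S] [Fintype T] [Fintype U]
    (μ : Measure Ω) (X : Ω → S) (Y : Ω → T) (Z : Ω → U) : ℝ :=
  condHent μ X Z + condHent μ Y Z - condHent μ (fun ω => (X ω, Y ω)) Z

lemma Hent_comp {Ω S T : Type*} [MeasurableSpace Ω] [Fintype S] [Fintype T]
    (μ : Measure Ω) (f : Ω → S) (g : S → T) (hg : Function.Injective g) :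
    Hent μ (fun ω => g (f ω)) = Hent μ f := by
  classical
  unfold Hent
  rw [← Finset.sum_subset (Finset.subset_univ (Finset.univ.image g))
      (fun t _ ht => by
        have : (fun ω => g (f ω)) ⁻¹' {t} = ∅ := by
          ext ω
          simp only [Set.mem_preimage, Set.mem_singleton_iff, Set.mem_empty_iff_false, iff_false]
          intro h
          exact ht (Finset.mem_image.mpr ⟨f ω, Finset.mem_univ _, h⟩)
        simp [this]),
    Finset.sum_image (fun a _ b _ h => hg h)]
  refine Finset.sum_congr rfl fun s _ => ?_
  congr 1
  have : (fun ω => g (f ω)) ⁻¹' {g s} = f ⁻¹' {s} := by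
    ext ω; simp [hg.eq_iff]
  rw [this]

lemma sum_toReal_measure_preimage {Ω S : Type*} [MeasurableSpace Ω] [Fintype S]
    [MeasurableSpace S] [MeasurableSingletonClass S]
    (μ : Measure Ω) [IsProbabilityMeasure μ] (f : Ω → S) (hf : Measurable f) :
    ∑ s : S, (μ (f ⁻¹' {s})).toReal = 1 := by
  rw [← ENNReal.toReal_sum (fun s _ => measure_ne_top μ _)]
  rw [sum_measure_preimage_singleton Finset.univ
    (fun s _ => hf (measurableSet_singleton s))]
  simp

lemma sum_negMulLog_smul {ι : Type*} [Fintype ι] (c : ℝ) (p : ι → ℝ) (h : ∑ i, p i = 1) :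
    ∑ i, Real.negMulLog (c * p i)
      = c * ∑ i, Real.negMulLog (p i) + Real.negMulLog c := by
  simp_rw [Real.negMulLog_mul]
  rw [Finset.sum_add_distrib, ← Finset.sum_mul, h, ← Finset.mul_sum]
  ring

lemma Hent_mix {Ω SA SB T : Type*} [MeasurableSpace Ω] [Fintype SA] [Fintype SB] [Fintype T]
    (μ : Measure Ω) (A : Ω → SA) (B : Ω → SB) (W : Ω → T) (E : Ω → Fin 2)
    (β : ℝ) (hβ0 : 0 ≤ β) (hβ1 : β ≤ 1)
    (h0 : ∀ b t, μ (E ⁻¹' {0} ∩ (fun ω => (B ω, W ω)) ⁻¹' {(b, t)}) =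
        ENNReal.ofReal β * μ ((fun ω => (B ω, W ω)) ⁻¹' {(b, t)}))
    (h1 : ∀ a t, μ (E ⁻¹' {1} ∩ (fun ω => (A ω, W ω)) ⁻¹' {(a, t)}) =
        ENNReal.ofReal (1 - β) * μ ((fun ω => (A ω, W ω)) ⁻¹' {(a, t)}))
    (hsB : ∑ p : SB × T, (μ ((fun ω => (B ω, W ω)) ⁻¹' {p})).toReal = 1)
    (hsA : ∑ p : SA × T, (μ ((fun ω => (A ω, W ω)) ⁻¹' {p})).toReal = 1) :
    Hent μ (fun ω =>
      ((if E ω = 0 then (Sum.inl (B ω) : SB ⊕ SA) else Sum.inr (A ω)), W ω)) =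
      β * Hent μ (fun ω => (B ω, W ω)) + (1 - β) * Hent μ (fun ω => (A ω, W ω)) +
        Real.negMulLog β + Real.negMulLog (1 - β) := by
  have preL : ∀ (b : SB) (t : T),
      (fun ω => ((if E ω = 0 then (Sum.inl (B ω) : SB ⊕ SA) else Sum.inr (A ω)), W ω)) ⁻¹'
        {(Sum.inl b, t)} = E ⁻¹' {0} ∩ (fun ω => (B ω, W ω)) ⁻¹' {(b, t)} := by
    intro b t
    ext ω
    by_cases h : E ω = 0 <;> simp [h, Prod.ext_iff]
  have preR : ∀ (a : SA) (t : T),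
      (fun ω => ((if E ω = 0 then (Sum.inl (B ω) : SB ⊕ SA) else Sum.inr (A ω)), W ω)) ⁻¹'
        {(Sum.inr a, t)} = E ⁻¹' {1} ∩ (fun ω => (A ω, W ω)) ⁻¹' {(a, t)} := by
    intro a t
    have hfin : ∀ x : Fin 2, ¬ x = 0 ↔ x = 1 := by decide
    ext ω
    by_cases h : E ω = 0 <;>
      simp [h, Prod.ext_iff, (hfin (E ω)).symm]
  have e0 : ∀ (b : SB) (t : T),
      (μ ((fun ω =>
        ((if E ω = 0 then (Sum.inl (B ω) : SB ⊕ SA) else Sum.inr (A ω)), W ω)) ⁻¹'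
          {(Sum.inl b, t)})).toReal
        = β * (μ ((fun ω => (B ω, W ω)) ⁻¹' {(b, t)})).toReal := by
    intro b t
    rw [preL, h0, ENNReal.toReal_mul, ENNReal.toReal_ofReal hβ0]
  have e1 : ∀ (a : SA) (t : T),
      (μ ((fun ω =>
        ((if E ω = 0 then (Sum.inl (B ω) : SB ⊕ SA) else Sum.inr (A ω)), W ω)) ⁻¹'
          {(Sum.inr a, t)})).toReal
        = (1 - β) * (μ ((fun ω => (A ω, W ω)) ⁻¹' {(a, t)})).toReal := by
    intro a t
    rw [preR, h1, ENNReal.toReal_mul, ENNReal.toReal_ofReal (by linarith)]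
  unfold Hent
  rw [Fintype.sum_prod_type, Fintype.sum_sum_type]
  simp_rw [e0, e1]
  rw [← Fintype.sum_prod_type (f := fun p : SB × T =>
        Real.negMulLog (β * (μ ((fun ω => (B ω, W ω)) ⁻¹' {p})).toReal)),
      ← Fintype.sum_prod_type (f := fun p : SA × T =>
        Real.negMulLog ((1 - β) * (μ ((fun ω => (A ω, W ω)) ⁻¹' {p})).toReal)),
      sum_negMulLog_smul β _ hsB, sum_negMulLog_smul (1 - β) _ hsA]
  ring

set_option maxHeartbeats 1000000 in
/-- Let `A, B, Y` be finitely-valued random variables, `β ∈ [0,1]`, and let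
`E` be a `{0,1}`-valued random variable with `P(E = 0) = β`, independent of `(A,B,Y)`.
Define `Ū := (B,0)` on `{E = 0}` and `Ū := (A,1)` on `{E = 1}` (encoded as
`Sum.inl (B ω)` resp. `Sum.inr (A ω)`). Then `I(Ū ; Y | A) = β · I(B ; Y | A)`. -/
theorem time_shared_auxiliary_condMutInfo
    {Ω SA SB SY : Type*} [MeasurableSpace Ω]
    [Fintype SA] [MeasurableSpace SA] [MeasurableSingletonClass SA]
    [Fintype SB] [MeasurableSpace SB] [MeasurableSingletonClass SB]
    [Fintype SY] [MeasurableSpace SY] [MeasurableSingletonClass SY]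
    (μ : Measure Ω) [IsProbabilityMeasure μ]
    (A : Ω → SA) (B : Ω → SB) (Y : Ω → SY) (E : Ω → Fin 2)
    (hA : Measurable A) (hB : Measurable B) (hY : Measurable Y) (hE : Measurable E)
    (β : ℝ) (hβ0 : 0 ≤ β) (hβ1 : β ≤ 1)
    (hEβ : μ (E ⁻¹' {0}) = ENNReal.ofReal β)
    (hEindep : IndepFun E (fun ω => (A ω, B ω, Y ω)) μ) :
    condMutInfo μ
      (fun ω => if E ω = 0 then (Sum.inl (B ω) : SB ⊕ SA) else Sum.inr (A ω)) Y A =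
    β * condMutInfo μ B Y A := by
  have hind := indepFun_iff_measure_inter_preimage_eq_mul.mp hEindep
  have hE1 : μ (E ⁻¹' {1}) = ENNReal.ofReal (1 - β) := by
    have hc : E ⁻¹' {(1 : Fin 2)} = (E ⁻¹' {0})ᶜ := by
      have hfin : ∀ x : Fin 2, x = 1 ↔ ¬ x = 0 := by decide
      ext ω; simp [hfin]
    rw [hc, measure_compl (hE (measurableSet_singleton 0)) (measure_ne_top _ _), hEβ,
      measure_univ, ENNReal.ofReal_sub _ hβ0, ENNReal.ofReal_one]
  -- independence, specialized
  have step : ∀ (i : Fin 2) (s : Set (SA × SB × SY)), MeasurableSet s →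
      μ (E ⁻¹' {i} ∩ (fun ω => (A ω, B ω, Y ω)) ⁻¹' s)
        = μ (E ⁻¹' {i}) * μ ((fun ω => (A ω, B ω, Y ω)) ⁻¹' s) :=
    fun i s hs => hind {i} s (measurableSet_singleton i) hs
  -- case W = A
  have hBA : ∀ (b : SB) (a : SA),
      (fun ω => (B ω, A ω)) ⁻¹' {(b, a)}
        = (fun ω => (A ω, B ω, Y ω)) ⁻¹' ({a} ×ˢ ({b} ×ˢ (Set.univ : Set SY))) := by
    intro b a; ext ω
    simp only [Set.mem_preimage, Set.mem_singleton_iff, Set.mem_prod, Set.mem_univ,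
      Prod.ext_iff, and_true]
    tauto
  have hBAm : ∀ (b : SB) (a : SA),
      MeasurableSet ({a} ×ˢ ({b} ×ˢ (Set.univ : Set SY))) := fun b a =>
    (measurableSet_singleton a).prod ((measurableSet_singleton b).prod MeasurableSet.univ)
  have h0A : ∀ (b : SB) (t : SA), μ (E ⁻¹' {0} ∩ (fun ω => (B ω, A ω)) ⁻¹' {(b, t)}) =
      ENNReal.ofReal β * μ ((fun ω => (B ω, A ω)) ⁻¹' {(b, t)}) := by
    intro b a
    rw [hBA, step 0 _ (hBAm b a), hEβ]
  have hAA : ∀ (a' a : SA),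
      (fun ω => (A ω, A ω)) ⁻¹' {(a', a)}
        = (fun ω => (A ω, B ω, Y ω)) ⁻¹' (({a'} ∩ {a}) ×ˢ (Set.univ : Set (SB × SY))) := by
    intro a' a; ext ω
    simp only [Set.mem_preimage, Set.mem_singleton_iff, Set.mem_prod, Set.mem_univ,
      Set.mem_inter_iff, Prod.ext_iff, and_true]
  have h1A : ∀ (a' a : SA), μ (E ⁻¹' {1} ∩ (fun ω => (A ω, A ω)) ⁻¹' {(a', a)}) =
      ENNReal.ofReal (1 - β) * μ ((fun ω => (A ω, A ω)) ⁻¹' {(a', a)}) := by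
    intro a' a
    rw [hAA, step 1 _ (((measurableSet_singleton a').inter
      (measurableSet_singleton a)).prod MeasurableSet.univ), hE1]
  -- case W = (Y, A)
  have hBYA : ∀ (b : SB) (y : SY) (a : SA),
      (fun ω => (B ω, (Y ω, A ω))) ⁻¹' {(b, (y, a))}
        = (fun ω => (A ω, B ω, Y ω)) ⁻¹' ({a} ×ˢ ({b} ×ˢ ({y} : Set SY))) := by
    intro b y a; ext ω
    simp only [Set.mem_preimage, Set.mem_singleton_iff, Set.mem_prod, Prod.ext_iff]
    tauto
  have h0YA : ∀ (b : SB) (t : SY × SA),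
      μ (E ⁻¹' {0} ∩ (fun ω => (B ω, (Y ω, A ω))) ⁻¹' {(b, t)}) =
      ENNReal.ofReal β * μ ((fun ω => (B ω, (Y ω, A ω))) ⁻¹' {(b, t)}) := by
    rintro b ⟨y, a⟩
    rw [hBYA, step 0 _ ((measurableSet_singleton a).prod
      ((measurableSet_singleton b).prod (measurableSet_singleton y))), hEβ]
  have hAYA : ∀ (a' : SA) (y : SY) (a : SA),
      (fun ω => (A ω, (Y ω, A ω))) ⁻¹' {(a', (y, a))}
        = (fun ω => (A ω, B ω, Y ω)) ⁻¹'
            (({a'} ∩ {a}) ×ˢ ((Set.univ : Set SB) ×ˢ ({y} : Set SY))) := by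
    intro a' y a; ext ω
    simp only [Set.mem_preimage, Set.mem_singleton_iff, Set.mem_prod, Set.mem_univ,
      Set.mem_inter_iff, Prod.ext_iff, true_and]
    tauto
  have h1YA : ∀ (a' : SA) (t : SY × SA),
      μ (E ⁻¹' {1} ∩ (fun ω => (A ω, (Y ω, A ω))) ⁻¹' {(a', t)}) =
      ENNReal.ofReal (1 - β) * μ ((fun ω => (A ω, (Y ω, A ω))) ⁻¹' {(a', t)}) := by
    rintro a' ⟨y, a⟩
    rw [hAYA, step 1 _ (((measurableSet_singleton a').inter
      (measurableSet_singleton a)).prod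
      (MeasurableSet.univ.prod (measurableSet_singleton y))), hE1]
  -- entropy identities
  have HU_A := Hent_mix μ A B A E β hβ0 hβ1 h0A h1A
    (sum_toReal_measure_preimage μ _ (hB.prodMk hA))
    (sum_toReal_measure_preimage μ _ (hA.prodMk hA))
  have HU_YA := Hent_mix μ A B (fun ω => (Y ω, A ω)) E β hβ0 hβ1 h0YA h1YA
    (sum_toReal_measure_preimage μ _ (hB.prodMk (hY.prodMk hA)))
    (sum_toReal_measure_preimage μ _ (hA.prodMk (hY.prodMk hA)))
  -- relabelings
  have r1 : Hent μ (fun ω => (A ω, A ω)) = Hent μ A :=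
    Hent_comp μ A (fun a => (a, a)) (fun a b h => (Prod.ext_iff.mp h).1)
  have r2 : Hent μ (fun ω => (A ω, (Y ω, A ω))) = Hent μ (fun ω => (Y ω, A ω)) :=
    Hent_comp μ (fun ω => (Y ω, A ω)) (fun p => (p.2, (p.1, p.2)))
      (fun p q h => Prod.ext_iff.mpr
        ⟨congrArg (fun x => x.2.1) h, congrArg (fun x => x.1) h⟩)
  have r3 : Hent μ (fun ω =>
      (((if E ω = 0 then (Sum.inl (B ω) : SB ⊕ SA) else Sum.inr (A ω)), Y ω), A ω)) =
      Hent μ (fun ω =>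
        ((if E ω = 0 then (Sum.inl (B ω) : SB ⊕ SA) else Sum.inr (A ω)), (Y ω, A ω))) :=
    Hent_comp μ (fun ω =>
        ((if E ω = 0 then (Sum.inl (B ω) : SB ⊕ SA) else Sum.inr (A ω)), (Y ω, A ω)))
      (fun p : (SB ⊕ SA) × SY × SA => ((p.1, p.2.1), p.2.2))
      (fun p q h => Prod.ext_iff.mpr ⟨congrArg (fun x => x.1.1) h,
        Prod.ext_iff.mpr ⟨congrArg (fun x => x.1.2) h, congrArg (fun x => x.2) h⟩⟩)
  have r4 : Hent μ (fun ω => ((B ω, Y ω), A ω)) =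
      Hent μ (fun ω => (B ω, (Y ω, A ω))) :=
    Hent_comp μ (fun ω => (B ω, (Y ω, A ω)))
      (fun p : SB × SY × SA => ((p.1, p.2.1), p.2.2))
      (fun p q h => Prod.ext_iff.mpr ⟨congrArg (fun x => x.1.1) h,
        Prod.ext_iff.mpr ⟨congrArg (fun x => x.1.2) h, congrArg (fun x => x.2) h⟩⟩)
  simp only [condMutInfo, condHent]
  rw [r3, r4, HU_A, HU_YA, r1, r2]
  ring
end

section
/- Let F ≥ 0 and D > 0 be real, K_w ≥ 1 and K_s ≥ 1 integers, and 0 ≤ δ_s ≤ δ_w < 1, with δ_s < 1. Define R₀ := F·(K_w/(1−δ_w) + K_s/(1−δ_s))⁻¹, R₁ := F(1−δ_w)·(1 + (K_w/K_s)·(δ_w−δ_s)/(1−δ_w)) / ( K_w·(1 + ((K_w−1)/(2K_s))·(δ_w−δ_s)/(1−δ_w)) + K_s(1−δ_w)/(1−δ_s) ), M₁ := R₁·(D/K_w)·(1 − (1 + (K_w/K_s)·(δ_w−δ_s)/(1−δ_w))⁻¹), γ_local := K_w(1−δ_s)/(K_w(1−δ_s)+K_s(1−δ_w)), γ_sep :=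 (1+K_w)/2, and γ_joint := 1 + (2K_w/(1+K_w))·(K_s(1−δ_w))/(K_w(1−δ_s)). Then D·(R₁ − R₀) = M₁ · γ_local · γ_sep · γ_joint; equivalently, the straight line through the achievable points (0, R₀) and (M₁, R₁) has slope (1/D)·γ_local·γ_sep·γ_joint. -/
/-!
Write `a = 1 - δ_w ≤ b = 1 - δ_s`, `w = K_w`, `s = K_s`. Clearing the nested fractions gives
`R₀ = F a b / Q` and `R₁ = 2 F a b N / P` with `Q = w b + s a`, `N = s a + w (b - a)` and
`P = 2 s a w b + w (w - 1)(b - a) b + 2 s² a²`, while the three gain factors multiply to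
`w ((1 + w) b + 2 s a) / (2 Q)`. The identity then reduces to
`2 N Q - P = w (b - a) ((1 + w) b + 2 s a)`.
-/

section SlopeIdentity

variable {a b w s : ℝ}

theorem corner_rate_one_eq (F : ℝ) (ha : 0 < a) (hab : a ≤ b) (hw : 1 ≤ w) (hs : 0 < s) :
    F * a * (1 + (w / s) * ((b - a) / a)) / (w * (1 + ((w - 1) / (2 * s)) * ((b - a) / a)) + s * a / b)
      = 2 * F * a * b * (s * a + w * (b - a)) /
          (2 * s * a * w * b + w * (w - 1) * (b - a) * b + 2 * s ^ 2 * a ^ 2) := by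
  have hb : 0 < b := ha.trans_le hab
  have := sub_nonneg.2 hw
  have := sub_nonneg.2 hab
  have hP : 0 < 2 * s * a * w * b + w * (w - 1) * (b - a) * b + 2 * s ^ 2 * a ^ 2 := by positivity
  have hden : 0 < w * (1 + ((w - 1) / (2 * s)) * ((b - a) / a)) + s * a / b := by positivity
  rw [div_eq_div_iff hden.ne' hP.ne']
  field_simp

theorem corner_rate_zero_eq (F : ℝ) (ha : a ≠ 0) (hb : b ≠ 0) :
    F * (w / a + s / b)⁻¹ = F * a * b / (w * b + s * a) := by
  field_simp

theorem one_sub_inv_one_add_eq (ha : 0 < a) (hab : a ≤ b) (hw : 0 < w) (hs : 0 < s) :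
    1 - (1 + (w / s) * ((b - a) / a))⁻¹ = w * (b - a) / (s * a + w * (b - a)) := by
  have := sub_nonneg.2 hab
  have : 0 < s * a + w * (b - a) := by positivity
  field_simp
  ring

theorem caching_gains_mul_eq (hb : b ≠ 0) (hw : 0 < w) :
    (w * b / (w * b + s * a)) * ((1 + w) / 2) * (1 + (2 * w / (1 + w)) * (s * a) / (w * b))
      = w * ((1 + w) * b + 2 * s * a) / (2 * (w * b + s * a)) := by
  field_simp

theorem slope_identity (F D : ℝ) (ha : 0 < a) (hab : a ≤ b) (hw : 1 ≤ w) (hs : 0 < s) :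
    D * (F * a * (1 + (w / s) * ((b - a) / a)) /
          (w * (1 + ((w - 1) / (2 * s)) * ((b - a) / a)) + s * a / b) - F * (w / a + s / b)⁻¹)
      = (F * a * (1 + (w / s) * ((b - a) / a)) /
          (w * (1 + ((w - 1) / (2 * s)) * ((b - a) / a)) + s * a / b) * (D / w) *
          (1 - (1 + (w / s) * ((b - a) / a))⁻¹)) *
        (w * b / (w * b + s * a)) * ((1 + w) / 2) * (1 + (2 * w / (1 + w)) * (s * a) / (w * b)) := by
  have hb : 0 < b := ha.trans_le hab
  have hw0 : 0 < w := one_pos.trans_le hw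
  rw [corner_rate_one_eq F ha hab hw hs, corner_rate_zero_eq F ha.ne' hb.ne',
    one_sub_inv_one_add_eq ha hab hw0 hs, mul_assoc _ ((1 + w) / 2),
    mul_assoc _ (w * b / (w * b + s * a)), ← mul_assoc (w * b / (w * b + s * a)),
    caching_gains_mul_eq hb.ne' hw0]
  have := sub_nonneg.2 hw
  have := sub_nonneg.2 hab
  have hN : 0 < s * a + w * (b - a) := by positivity
  have hP : 0 < 2 * s * a * w * b + w * (w - 1) * (b - a) * b + 2 * s ^ 2 * a ^ 2 := by positivity
  have hQ : 0 < w * b + s * a := by positivity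
  field_simp
  ring

end SlopeIdentity

theorem small_memory_slope_general (F D : ℝ)
    (Kw Ks : ℕ) (hKw : 1 ≤ Kw) (hKs : 1 ≤ Ks)
    (δs δw : ℝ) (hsw : δs ≤ δw) (hδw1 : δw < 1) :
    D * (F * (1 - δw) * (1 + ((Kw : ℝ) / (Ks : ℝ)) * ((δw - δs) / (1 - δw))) /
          ((Kw : ℝ) * (1 + (((Kw : ℝ) - 1) / (2 * (Ks : ℝ))) * ((δw - δs) / (1 - δw))) +
            (Ks : ℝ) * (1 - δw) / (1 - δs)) -
        F * ((Kw : ℝ) / (1 - δw) + (Ks : ℝ) / (1 - δs))⁻¹) =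
      (F * (1 - δw) * (1 + ((Kw : ℝ) / (Ks : ℝ)) * ((δw - δs) / (1 - δw))) /
          ((Kw : ℝ) * (1 + (((Kw : ℝ) - 1) / (2 * (Ks : ℝ))) * ((δw - δs) / (1 - δw))) +
            (Ks : ℝ) * (1 - δw) / (1 - δs)) *
        (D / (Kw : ℝ)) *
        (1 - (1 + ((Kw : ℝ) / (Ks : ℝ)) * ((δw - δs) / (1 - δw)))⁻¹)) *
      ((Kw : ℝ) * (1 - δs) / ((Kw : ℝ) * (1 - δs) + (Ks : ℝ) * (1 - δw))) *
      ((1 + (Kw : ℝ)) / 2) *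
      (1 + (2 * (Kw : ℝ) / (1 + (Kw : ℝ))) * ((Ks : ℝ) * (1 - δw)) / ((Kw : ℝ) * (1 - δs))) := by
  have hdiff : δw - δs = (1 - δs) - (1 - δw) := by ring
  rw [hdiff]
  exact slope_identity F D (sub_pos.2 hδw1) (by linarith) (by exact_mod_cast hKw)
    (by exact_mod_cast hKs)

/-- With
`R₀ := F·(K_w/(1−δ_w) + K_s/(1−δ_s))⁻¹`,
`R₁ := F(1−δ_w)·(1 + (K_w/K_s)·(δ_w−δ_s)/(1−δ_w)) /
       (K_w·(1 + ((K_w−1)/(2K_s))·(δ_w−δ_s)/(1−δ_w)) + K_s(1−δ_w)/(1−δ_s))`,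
`M₁ := R₁·(D/K_w)·(1 − (1 + (K_w/K_s)·(δ_w−δ_s)/(1−δ_w))⁻¹)`,
`γ_local := K_w(1−δ_s)/(K_w(1−δ_s)+K_s(1−δ_w))`, `γ_sep := (1+K_w)/2`,
`γ_joint := 1 + (2K_w/(1+K_w))·(K_s(1−δ_w))/(K_w(1−δ_s))`, we have
`D·(R₁ − R₀) = M₁·γ_local·γ_sep·γ_joint`. -/
theorem small_memory_slope (F D : ℝ) (hF : 0 ≤ F) (hD : 0 < D)
    (Kw Ks : ℕ) (hKw : 1 ≤ Kw) (hKs : 1 ≤ Ks)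
    (δs δw : ℝ) (hδs0 : 0 ≤ δs) (hsw : δs ≤ δw) (hδw1 : δw < 1) (hδs1 : δs < 1) :
    D * (F * (1 - δw) * (1 + ((Kw : ℝ) / (Ks : ℝ)) * ((δw - δs) / (1 - δw))) /
          ((Kw : ℝ) * (1 + (((Kw : ℝ) - 1) / (2 * (Ks : ℝ))) * ((δw - δs) / (1 - δw))) +
            (Ks : ℝ) * (1 - δw) / (1 - δs)) -
        F * ((Kw : ℝ) / (1 - δw) + (Ks : ℝ) / (1 - δs))⁻¹) =
      (F * (1 - δw) * (1 + ((Kw : ℝ) / (Ks : ℝ)) * ((δw - δs) / (1 - δw))) /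
          ((Kw : ℝ) * (1 + (((Kw : ℝ) - 1) / (2 * (Ks : ℝ))) * ((δw - δs) / (1 - δw))) +
            (Ks : ℝ) * (1 - δw) / (1 - δs)) *
        (D / (Kw : ℝ)) *
        (1 - (1 + ((Kw : ℝ) / (Ks : ℝ)) * ((δw - δs) / (1 - δw)))⁻¹)) *
      ((Kw : ℝ) * (1 - δs) / ((Kw : ℝ) * (1 - δs) + (Ks : ℝ) * (1 - δw))) *
      ((1 + (Kw : ℝ)) / 2) *
      (1 + (2 * (Kw : ℝ) / (1 + (Kw : ℝ))) * ((Ks : ℝ) * (1 - δw)) / ((Kw : ℝ) * (1 - δs))) :=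
  small_memory_slope_general F D Kw Ks hKw hKs δs δw hsw hδw1
end
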